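/- Let Ω be a compact metric space with distance ρ and let F : [0,∞) → [0,∞) be continuous. If μ̃ ∈ 𝒫(Ω) is a local minimizer of I_F in the weak-* topology, then the potential x ↦ ∫_Ω F(ρ(x,y)) dμ̃(y) is constant on supp μ̃; consequently, for every finite signed Borel measure ν with ν(Ω) = 0 and supp ν ⊆ supp μ̃, one has ∬_Ω F(ρ(x,y)) dμ̃(x) dν(y) = 0. -/

import Mathlib

/-!
Perturbing a local minimizer `μ` towards a point mass, `(1 - t) μ + t δₓ`, changes the energy by
`2 t (V x - I(μ)) + O(t²)`, where `V` is the potential of `μ`; local minimality therefore forces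
`V ≥ I(μ)` everywhere. As `∫ V dμ = I(μ)` and `V` is continuous, `V = I(μ)` on `supp μ`. A signed
measure `ν` carried by `supp μ` then integrates `V` to `I(μ) ν(Ω) = 0`.
-/

open MeasureTheory Topology Filter
open scoped ENNReal NNReal

/-- The support of a (nonnegative) Borel measure: points all of whose open
neighborhoods have positive measure. -/
def msupp {Ω : Type*} [TopologicalSpace Ω] {m : MeasurableSpace Ω}
    (μ : Measure Ω) : Set Ω :=
  {x | ∀ U : Set Ω, IsOpen U → x ∈ U → μ U ≠ 0}

/-- The interaction energy `I_F(μ) = ∬ F(ρ(x,y)) dμ(x) dμ(y)` of a measure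
with respect to a kernel `F` and a distance function `ρ`. -/
noncomputable def energy {Ω : Type*} {m : MeasurableSpace Ω}
    (F : ℝ → ℝ) (ρ : Ω → Ω → ℝ) (μ : Measure Ω) : ℝ :=
  ∫ x, ∫ y, F (ρ x y) ∂μ ∂μ

/-- The integral of a function against a finite signed measure, via the
Jordan decomposition. -/
noncomputable def sintegral {Ω : Type*} {m : MeasurableSpace Ω}
    (ν : SignedMeasure Ω) (f : Ω → ℝ) : ℝ :=
  ∫ x, f x ∂ν.toJordanDecomposition.posPart
    - ∫ x, f x ∂ν.toJordanDecomposition.negPart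

/-- The interaction energy `∬ F(ρ(x,y)) dν(x) dν(y)` of a finite signed
measure `ν`. -/
noncomputable def signedEnergy {Ω : Type*} {m : MeasurableSpace Ω}
    (F : ℝ → ℝ) (ρ : Ω → Ω → ℝ) (ν : SignedMeasure Ω) : ℝ :=
  sintegral ν (fun x => sintegral ν (fun y => F (ρ x y)))

/-- The Wasserstein `d_∞` distance: infimum over couplings `π` of `μ` and `ν`
of the supremum of `ρ(x,y)` over the support of `π`. -/
noncomputable def dInfty {Ω : Type*} [TopologicalSpace Ω] {m : MeasurableSpace Ω}
    (ρ : Ω → Ω → ℝ) (μ ν : Measure Ω) : ℝ≥0∞ :=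
  ⨅ (π : Measure (Ω × Ω)) (_ : π.map Prod.fst = μ ∧ π.map Prod.snd = ν),
    ⨆ (p : Ω × Ω) (_ : p ∈ msupp π), ENNReal.ofReal (ρ p.1 p.2)

open unitInterval

section Support

variable {Ω : Type*} [TopologicalSpace Ω] {m : MeasurableSpace Ω}

lemma msupp_eq_support (μ : Measure Ω) : msupp μ = μ.support := by
  ext x
  simp only [msupp, Measure.support_eq_forall_isOpen, Set.mem_ofPred_eq, pos_iff_ne_zero]
  exact forall_congr' fun U => imp.swap

lemma Continuous.eqOn_support_of_ae_eq {α : Type*} [TopologicalSpace α] [T2Space α]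
    {μ : Measure Ω} {f g : Ω → α} (hf : Continuous f) (hg : Continuous g)
    (hfg : f =ᵐ[μ] g) : Set.EqOn f g μ.support := fun x hx => by
  by_contra hne
  exact Measure.subset_compl_support_of_isOpen (isOpen_ne_fun hf hg) (ae_iff.mp hfg) hne hx

lemma Continuous.eqOn_support_of_le_of_integral_eq {μ : Measure Ω} [IsProbabilityMeasure μ]
    {f : Ω → ℝ} {c : ℝ} (hf : Continuous f) (hfi : Integrable f μ) (hle : ∀ x, c ≤ f x)
    (hint : ∫ x, f x ∂μ = c) : Set.EqOn f (fun _ => c) μ.support := by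
  have hsub : ∫ x, (f x - c) ∂μ = 0 := by
    rw [integral_sub hfi (integrable_const c), hint, integral_const, probReal_univ, one_smul,
      sub_self]
  have hae : (fun x => f x - c) =ᵐ[μ] 0 :=
    (integral_eq_zero_iff_of_nonneg (fun x => sub_nonneg.2 (hle x))
      (hfi.sub (integrable_const c))).1 hsub
  exact hf.eqOn_support_of_ae_eq continuous_const (hae.mono fun x hx => sub_eq_zero.1 hx)

end Support

lemma sintegral_eq_mul_of_ae_eq_const {Ω : Type*} {m : MeasurableSpace Ω}
    {ν : SignedMeasure Ω} {f : Ω → ℝ} {c : ℝ}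
    (hf : f =ᵐ[ν.totalVariation] fun _ => c) : sintegral ν f = c * ν Set.univ := by
  have hpos := hf.filter_mono (ae_mono (Measure.le_add_right le_rfl))
  have hneg := hf.filter_mono (ae_mono (Measure.le_add_left le_rfl))
  have hν : ν Set.univ = ν.toJordanDecomposition.posPart.real Set.univ
      - ν.toJordanDecomposition.negPart.real Set.univ := by
    conv_lhs => rw [← ν.toSignedMeasure_toJordanDecomposition]
    exact Measure.toSignedMeasure_sub_apply MeasurableSet.univ
  rw [sintegral, integral_congr_ae hpos, integral_congr_ae hneg, integral_const, integral_const,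
    hν, smul_eq_mul, smul_eq_mul]
  ring

lemma unitInterval.nonneg_of_eventually_nonneg_mul {a b : ℝ}
    (h : ∀ᶠ t : I in 𝓝 0, 0 ≤ (t : ℝ) * (a + t * b)) : 0 ≤ a := by
  have hproj : Tendsto (Set.projIcc (0 : ℝ) 1 zero_le_one) (𝓝 0) (𝓝 0) := by
    simpa [Set.projIcc_left] using (continuous_projIcc (h := zero_le_one)).tendsto (0 : ℝ)
  have hlin : ∀ᶠ s in 𝓝[>] (0 : ℝ), 0 ≤ a + s * b := by
    filter_upwards [(hproj.eventually h).filter_mono nhdsWithin_le_nhds,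
      Ioo_mem_nhdsGT (zero_lt_one' ℝ)] with s hs hs01
    rw [Set.projIcc_of_mem _ (Set.Ioo_subset_Icc_self hs01)] at hs
    exact nonneg_of_mul_nonneg_right hs hs01.1
  have hlim : Tendsto (fun s : ℝ => a + s * b) (𝓝[>] 0) (𝓝 (a + 0 * b)) :=
    (Continuous.tendsto (by fun_prop) 0).mono_left nhdsWithin_le_nhds
  simpa using ge_of_tendsto hlim hlin

noncomputable def potential {Ω : Type*} {m : MeasurableSpace Ω}
    (F : ℝ → ℝ) (ρ : Ω → Ω → ℝ) (μ : Measure Ω) (x : Ω) : ℝ :=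
  ∫ y, F (ρ x y) ∂μ

lemma energy_eq_integral_potential {Ω : Type*} {m : MeasurableSpace Ω}
    (F : ℝ → ℝ) (ρ : Ω → Ω → ℝ) (μ : Measure Ω) :
    energy F ρ μ = ∫ x, potential F ρ μ x ∂μ := rfl

noncomputable def diracMix {Ω : Type*} {m : MeasurableSpace Ω}
    (μ : ProbabilityMeasure Ω) (x : Ω) (t : I) : ProbabilityMeasure Ω :=
  ⟨toNNReal (σ t) • (μ : Measure Ω) + toNNReal t • Measure.dirac x,
    ⟨by simp [add_comm]⟩⟩

section DiracMix

variable {Ω : Type*} {m : MeasurableSpace Ω} (μ : ProbabilityMeasure Ω) (x : Ω)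

@[simp]
lemma diracMix_zero : diracMix μ x 0 = μ := by
  ext1
  simp [diracMix]

lemma integral_diracMix (t : I) {f : Ω → ℝ} (hfi : Integrable f μ)
    (hfm : StronglyMeasurable f) :
    ∫ y, f y ∂(diracMix μ x t : Measure Ω) = (1 - t) * ∫ y, f y ∂μ + t * f x := by
  rw [diracMix, ProbabilityMeasure.coe_mk,
    integral_add_measure hfi.smul_measure_nnreal
      (integrable_dirac' hfm enorm_lt_top).smul_measure_nnreal,
    integral_smul_nnreal_measure, integral_smul_nnreal_measure, integral_dirac' f x hfm]
  simp only [NNReal.smul_def, coe_toNNReal, coe_symm_eq, smul_eq_mul]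

lemma continuous_diracMix [TopologicalSpace Ω] [OpensMeasurableSpace Ω] :
    Continuous (diracMix μ x) := by
  refine continuous_iff_continuousAt.2 fun t₀ => ?_
  rw [ContinuousAt, ProbabilityMeasure.tendsto_iff_forall_integral_tendsto]
  intro f
  have hint := fun t => integral_diracMix μ x t (f.integrable μ) f.continuous.stronglyMeasurable
  simp only [hint]
  exact Continuous.tendsto (by fun_prop) t₀

end DiracMix

section Kernel

variable {Ω : Type*} [TopologicalSpace Ω] [CompactSpace Ω] [MeasurableSpace Ω]
  [OpensMeasurableSpace Ω] {F : ℝ → ℝ} {ρ : Ω → Ω → ℝ}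

lemma Continuous.integrable_of_compactSpace {f : Ω → ℝ} (hf : Continuous f) (μ : Measure Ω)
    [IsFiniteMeasure μ] : Integrable f μ :=
  hf.integrable_of_hasCompactSupport (.of_compactSpace f)

lemma continuous_potential [FirstCountableTopology Ω]
    (hK : Continuous fun p : Ω × Ω => F (ρ p.1 p.2)) (μ : Measure Ω) [IsFiniteMeasure μ] :
    Continuous (potential F ρ μ) := by
  obtain ⟨C, hC⟩ := isCompact_univ.exists_bound_of_continuousOn hK.continuousOn
  exact continuous_of_dominated
    (fun x => (hK.comp (continuous_const.prodMk continuous_id)).aestronglyMeasurable)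
    (fun x => Eventually.of_forall fun y => hC (x, y) (Set.mem_univ _))
    (integrable_const C)
    (Eventually.of_forall fun y => hK.comp (continuous_id.prodMk continuous_const))

lemma energy_diracMix [FirstCountableTopology Ω]
    (hK : Continuous fun p : Ω × Ω => F (ρ p.1 p.2)) (hρ : ∀ x y, ρ x y = ρ y x)
    (μ : ProbabilityMeasure Ω) (x : Ω) (t : I) :
    energy F ρ (diracMix μ x t) = energy F ρ μ + t * (2 * (potential F ρ μ x - energy F ρ μ)
      + t * (energy F ρ μ - 2 * potential F ρ μ x + F (ρ x x))) := by
  have hKx : ∀ x, Continuous fun y => F (ρ x y) := fun x =>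
    hK.comp (continuous_const.prodMk continuous_id)
  have hKy : ∀ y, Continuous fun x => F (ρ x y) := fun y =>
    hK.comp (continuous_id.prodMk continuous_const)
  have hpot : potential F ρ (diracMix μ x t) =
      fun y => (1 - t) * potential F ρ μ y + t * F (ρ y x) := funext fun y =>
    integral_diracMix μ x t ((hKx y).integrable_of_compactSpace _) (hKx y).stronglyMeasurable
  have hV := continuous_potential hK (μ : Measure Ω)
  have hg : Continuous fun y => (1 - t) * potential F ρ μ y + t * F (ρ y x) :=
    (continuous_const.mul hV).add (continuous_const.mul (hKy x))
  have hsymm : ∫ y, F (ρ y x) ∂(μ : Measure Ω) = potential F ρ μ x := by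
    simp only [potential, hρ _ x]
  rw [energy_eq_integral_potential, hpot,
    integral_diracMix μ x t (hg.integrable_of_compactSpace _) hg.stronglyMeasurable,
    integral_add ((hV.integrable_of_compactSpace _).const_mul _)
      (((hKy x).integrable_of_compactSpace _).const_mul _),
    integral_const_mul, integral_const_mul, hsymm, ← energy_eq_integral_potential]
  ring

theorem energy_le_potential_of_isLocalMin [FirstCountableTopology Ω]
    (hK : Continuous fun p : Ω × Ω => F (ρ p.1 p.2)) (hρ : ∀ x y, ρ x y = ρ y x)
    {μ : ProbabilityMeasure Ω}
    (hmin : IsLocalMin (fun ν : ProbabilityMeasure Ω => energy F ρ ν) μ) (x : Ω) :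
    energy F ρ μ ≤ potential F ρ μ x := by
  have hmix : ∀ᶠ t in 𝓝 (0 : I), energy F ρ μ ≤ energy F ρ (diracMix μ x t) := by
    have hcont := (continuous_diracMix μ x).tendsto 0
    rw [diracMix_zero] at hcont
    exact hcont.eventually hmin
  have hvar : ∀ᶠ t : I in 𝓝 0, 0 ≤ (t : ℝ) * (2 * (potential F ρ μ x - energy F ρ μ)
      + t * (energy F ρ μ - 2 * potential F ρ μ x + F (ρ x x))) := hmix.mono fun t ht => by
    rw [energy_diracMix hK hρ] at ht
    linarith
  linarith [unitInterval.nonneg_of_eventually_nonneg_mul hvar]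

theorem potential_eqOn_support_of_isLocalMin [FirstCountableTopology Ω]
    (hK : Continuous fun p : Ω × Ω => F (ρ p.1 p.2)) (hρ : ∀ x y, ρ x y = ρ y x)
    {μ : ProbabilityMeasure Ω}
    (hmin : IsLocalMin (fun ν : ProbabilityMeasure Ω => energy F ρ ν) μ) :
    Set.EqOn (potential F ρ μ) (fun _ => energy F ρ μ) (μ : Measure Ω).support :=
  have hV := continuous_potential hK (μ : Measure Ω)
  hV.eqOn_support_of_le_of_integral_eq (hV.integrable_of_compactSpace _)
    (energy_le_potential_of_isLocalMin hK hρ hmin) (energy_eq_integral_potential F ρ μ).symm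

end Kernel

theorem stmt_4_general {Ω : Type*} [MetricSpace Ω] [CompactSpace Ω]
    [MeasurableSpace Ω] [BorelSpace Ω]
    (F : ℝ → ℝ) (hF_cont : ContinuousOn F (Set.Ici 0))
    (μt : ProbabilityMeasure Ω)
    (hmin : ∃ U ∈ 𝓝 μt, ∀ μ ∈ U,
      energy F dist (μt : Measure Ω) ≤ energy F dist (μ : Measure Ω)) :
    (∀ x ∈ msupp (μt : Measure Ω), ∀ x' ∈ msupp (μt : Measure Ω),
        ∫ y, F (dist x y) ∂(μt : Measure Ω) = ∫ y, F (dist x' y) ∂(μt : Measure Ω)) ∧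
    (∀ ν : SignedMeasure Ω, ν Set.univ = 0 →
      msupp ν.totalVariation ⊆ msupp (μt : Measure Ω) →
      sintegral ν (fun y => ∫ x, F (dist x y) ∂(μt : Measure Ω)) = 0) := by
  have hK : Continuous fun p : Ω × Ω => F (dist p.1 p.2) :=
    hF_cont.comp_continuous (continuous_fst.dist continuous_snd) fun _ => dist_nonneg
  have hconst := potential_eqOn_support_of_isLocalMin hK dist_comm
    (Filter.eventually_iff_exists_mem.2 hmin)
  simp only [msupp_eq_support]
  refine ⟨fun x hx x' hx' => (hconst hx).trans (hconst hx').symm, fun ν hν hsupp => ?_⟩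
  have hae : (fun y => ∫ x, F (dist x y) ∂(μt : Measure Ω)) =ᵐ[ν.totalVariation]
      fun _ => energy F dist (μt : Measure Ω) := by
    filter_upwards [Measure.support_mem_ae] with y hy
    simp only [dist_comm _ y]
    exact hconst (hsupp hy)
  rw [sintegral_eq_mul_of_ae_eq_const hae, hν, mul_zero]

/-- constancy of the potential on the support.
If `μ̃` is a local weak-* minimizer of `I_F`, then the potential
`x ↦ ∫ F(ρ(x,y)) dμ̃(y)` is constant on `supp μ̃`; consequently
`∬ F(ρ(x,y)) dμ̃(x) dν(y) = 0` for every finite signed Borel measure `ν` with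
`ν(Ω) = 0` and `supp ν ⊆ supp μ̃`. -/
theorem stmt_4 {Ω : Type*} [MetricSpace Ω] [CompactSpace Ω]
    [MeasurableSpace Ω] [BorelSpace Ω]
    (F : ℝ → ℝ) (hF_cont : ContinuousOn F (Set.Ici 0))
    (hF_nonneg : ∀ t ∈ Set.Ici (0 : ℝ), 0 ≤ F t)
    (μt : ProbabilityMeasure Ω)
    (hmin : ∃ U ∈ 𝓝 μt, ∀ μ ∈ U,
      energy F dist (μt : Measure Ω) ≤ energy F dist (μ : Measure Ω)) :
    (∀ x ∈ msupp (μt : Measure Ω), ∀ x' ∈ msupp (μt : Measure Ω),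
        ∫ y, F (dist x y) ∂(μt : Measure Ω) = ∫ y, F (dist x' y) ∂(μt : Measure Ω)) ∧
    (∀ ν : SignedMeasure Ω, ν Set.univ = 0 →
      msupp ν.totalVariation ⊆ msupp (μt : Measure Ω) →
      sintegral ν (fun y => ∫ x, F (dist x y) ∂(μt : Measure Ω)) = 0) :=
  stmt_4_general F hF_cont μt hmin
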